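/- Let X be a tame EM-simplicial set, let x ∈ X_n be supported on the finite set A ⊆ ω, and let φ : [m] → [n] be a map in the simplex category Δ. Then (u_0,…,u_m).φ^*x = (v_0,…,v_m).φ^*x for all u_0,…,u_m,v_0,…,v_m ∈ M such that u_i(a) = v_i(a) for all i = 0,…,m and all a ∈ A. -/

import Mathlib

noncomputable section

/- ## Basic setup: the monoid `M = Inj(ω,ω)`, supports, tameness, universal subgroups -/

open CategoryTheory Opposite Simplicial MonoidalCategory

set_option linter.unusedVariables false

/-- The monoid `𝕄 = Inj(ω,ω)` of injective self-maps of `ω = ℕ`, under composition. -/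
noncomputable def Mi : Type := {f : ℕ → ℕ // Function.Injective f}

noncomputable instance : Monoid Mi where
  one := ⟨id, fun _ _ h => h⟩
  mul u v := ⟨u.1 ∘ v.1, u.2.comp v.2⟩
  mul_assoc u v w := rfl
  one_mul u := rfl
  mul_one u := rfl

@[simp] lemma Mi.one_apply (n : ℕ) : (1 : Mi).1 n = n := rfl
@[simp] lemma Mi.mul_apply (u v : Mi) (n : ℕ) : (u * v).1 n = u.1 (v.1 n) := rfl

/-- An element `x` of an `𝕄`-"set" (given by a raw action `act`) is supported on `A ⊆ ω` if
every `u ∈ 𝕄` fixing `A` pointwise fixes `x`. -/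
noncomputable def MSuppOn {X : Type*} (act : Mi → X → X) (A : Set ℕ) (x : X) : Prop :=
  ∀ u : Mi, (∀ a ∈ A, u.1 a = a) → act u x = x

/-- Finitely supported elements. -/
noncomputable def MFinSupp {X : Type*} (act : Mi → X → X) (x : X) : Prop :=
  ∃ A : Set ℕ, A.Finite ∧ MSuppOn act A x

/-- The support of an element: the intersection of all finite sets on which it is supported. -/
noncomputable def MSupp {X : Type*} (act : Mi → X → X) (x : X) : Set ℕ :=
  ⋂₀ setOf (fun (A : Set ℕ) => A.Finite ∧ MSuppOn act A x)

/-- A (raw) `𝕄`-action is tame if every element is finitely supported. -/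
noncomputable def MTame {X : Type*} (act : Mi → X → X) : Prop := ∀ x : X, MFinSupp act x

/-- A submonoid `H ⊆ 𝕄` is a *universal subgroup* if it is a finite subgroup and `ω`, with the
tautological `H`-action, is a complete `H`-set universe, i.e. every finite `H`-set embeds
`H`-equivariantly into `ω`. -/
noncomputable def IsUniversal (H : Submonoid Mi) : Prop :=
  (∀ h ∈ H, ∃ h' ∈ H, h * h' = 1 ∧ h' * h = 1) ∧ Finite H ∧
    ∀ (n : ℕ) (ρ : ↥H →* Equiv.Perm (Fin n)), ∃ e : Fin n → ℕ,
      Function.Injective e ∧ ∀ (h : ↥H) (i : Fin n), e (ρ h i) = (h : Mi).1 (e i)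

/- ## `E𝕄`-simplicial sets: simplicial sets with an action of the simplicial monoid `E𝕄`,
  where `(E𝕄)_n = 𝕄^{n+1}`. -/

/-- An `E𝕄`-simplicial set: a simplicial set `X` together with, levelwise, an action of
`𝕄^{n+1} = (E𝕄)_n` on `X_n`, compatible with the simplicial structure maps. -/
structure EMSSet : Type 1 where
  X : SSet.{0}
  act : ∀ o : SimplexCategoryᵒᵖ, (Fin (o.unop.len + 1) → Mi) → X.obj o → X.obj o
  act_one : ∀ o x, act o (fun _ => 1) x = x
  act_mul : ∀ o u v x, act o (fun i => u i * v i) x = act o u (act o v x)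
  act_map : ∀ {o o' : SimplexCategoryᵒᵖ} (f : o ⟶ o') (u : Fin (o.unop.len + 1) → Mi)
      (x : X.obj o), X.map f (act o u x) = act o' (fun i => u (f.unop.toOrderHom i)) (X.map f x)

namespace EMSSet

/-- A simplex `x ∈ X_n` is `k`-supported on `A` if every `u ∈ 𝕄` fixing `A` pointwise,
inserted in the `(k+1)`-st coordinate of `𝕄^{n+1}` (identities elsewhere), fixes `x`. -/
noncomputable def KSuppOn (E : EMSSet) {o : SimplexCategoryᵒᵖ} (k : Fin (o.unop.len + 1)) (A : Set ℕ)
    (x : E.X.obj o) : Prop :=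
  ∀ w : Mi, (∀ a ∈ A, w.1 a = a) → E.act o (fun i => if i = k then w else 1) x = x

/-- `x` is `k`-finitely supported. -/
noncomputable def KFinSupp (E : EMSSet) {o : SimplexCategoryᵒᵖ} (k : Fin (o.unop.len + 1))
    (x : E.X.obj o) : Prop :=
  ∃ A : Set ℕ, A.Finite ∧ E.KSuppOn k A x

/-- The `k`-th support of a simplex: the intersection of all finite sets on which it is
`k`-supported. -/
noncomputable def ksupp (E : EMSSet) {o : SimplexCategoryᵒᵖ} (k : Fin (o.unop.len + 1))
    (x : E.X.obj o) : Set ℕ :=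
  ⋂₀ setOf (fun (A : Set ℕ) => A.Finite ∧ E.KSuppOn k A x)

/-- `x` is supported on `A` if it is `k`-supported on `A` for all `k`. -/
noncomputable def SuppOn (E : EMSSet) {o : SimplexCategoryᵒᵖ} (A : Set ℕ) (x : E.X.obj o) : Prop :=
  ∀ k, E.KSuppOn k A x

/-- The support of a (finitely supported) simplex. -/
noncomputable def supp (E : EMSSet) {o : SimplexCategoryᵒᵖ} (x : E.X.obj o) : Set ℕ :=
  ⋃ k, E.ksupp k x

/-- An `E𝕄`-simplicial set is tame if every simplex is `k`-finitely supported for all `k`. -/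
noncomputable def Tame (E : EMSSet) : Prop :=
  ∀ (o : SimplexCategoryᵒᵖ) (x : E.X.obj o) (k : Fin (o.unop.len + 1)), E.KFinSupp k x

end EMSSet

/-- Morphisms of `E𝕄`-simplicial sets: `E𝕄`-equivariant simplicial maps. -/
@[ext] structure EMHom (E F : EMSSet) : Type where
  toHom : E.X ⟶ F.X
  equiv : ∀ (o : SimplexCategoryᵒᵖ) (u : Fin (o.unop.len + 1) → Mi) (x : E.X.obj o),
    toHom.app o (E.act o u x) = F.act o u (toHom.app o x)

namespace EMHom

noncomputable def id' (E : EMSSet) : EMHom E E :=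
  ⟨𝟙 E.X, fun _ _ _ => rfl⟩

noncomputable def comp {E F G : EMSSet} (f : EMHom E F) (g : EMHom F G) : EMHom E G :=
  ⟨f.toHom ≫ g.toHom, fun o u x => by
    have h1 := f.equiv o u x
    have h2 := g.equiv o u (f.toHom.app o x)
    show g.toHom.app o (f.toHom.app o _) = _
    rw [h1, h2]
    rfl⟩

end EMHom

noncomputable instance : Category EMSSet where
  Hom := EMHom
  id := EMHom.id'
  comp := EMHom.comp
  id_comp f := by apply EMHom.ext; simp [EMHom.comp, EMHom.id']
  comp_id f := by apply EMHom.ext; simp [EMHom.comp, EMHom.id']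
  assoc f g h := by apply EMHom.ext; simp [EMHom.comp]

/-! Pulling back along `φ` turns the insertion of `w` into coordinate `k` into its insertion into
the whole block `φ⁻¹ k`, so at first `φ^* x` is only known to be fixed by such block insertions.
To isolate one coordinate `i` of a block, pick `s` fixing `A` and `t` fixing a finite support `B`
of `φ^* x` (tameness) with `t w s = s`: then `i_i(w) · block(s) = t' · block(w s)`, where `t'`
inserts `t` into the other coordinates of the block, and all of `block(s)`, `block(w s)`, `t'` fix
`φ^* x`. Finally, once `φ^* x` is supported on `A`, write `u_i = p_i (q_i u_i)` with `p_i` a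
permutation agreeing with `u_i` on `A` and `q_i` its inverse; then `q_i u_i` and `q_i v_i` fix `A`,
so `u` and `v` both act on `φ^* x` as `p` does. -/

namespace Mi

lemma exists_mul_eq_one_and_fix {A : Set ℕ} (hA : A.Finite) (g : Mi) :
    ∃ p q : Mi, p * q = 1 ∧ ∀ a ∈ A, (q * g).1 a = a := by
  obtain ⟨π, hπ⟩ := Cardinal.extend_function_of_lt
    (⟨fun a : A => g.1 a, g.2.comp Subtype.val_injective⟩ : A ↪ ℕ)
    (by simpa using hA.lt_aleph0) ⟨Equiv.refl ℕ⟩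
  refine ⟨⟨π, π.injective⟩, ⟨π.symm, π.symm.injective⟩,
    Subtype.ext (funext π.apply_symm_apply), fun a ha => ?_⟩
  exact π.symm_apply_eq.2 (hπ ⟨a, ha⟩).symm

lemma exists_eqOn_of_injOn {D : Set ℕ} {g : ℕ → ℕ} (hg : D.InjOn g) (hD : (g '' D)ᶜ.Infinite) :
    ∃ t : Mi, D.EqOn t.1 g := by
  classical
  let e := hD.natEmbedding
  refine ⟨⟨D.piecewise g (fun n => e n), (Set.injective_piecewise_iff D).2 ⟨hg, ?_, ?_⟩⟩,
    Set.piecewise_eqOn D _ _⟩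
  · exact fun m _ n _ h => e.injective (Subtype.ext h)
  · exact fun m hm n _ h => (e n).2 (h ▸ Set.mem_image_of_mem g hm)

lemma exists_fix_avoid {A F : Set ℕ} (hF : F.Finite) (hAF : A ⊆ F) :
    ∃ s : Mi, (∀ a ∈ A, s.1 a = a) ∧ (∀ n ∉ A, s.1 n ∉ F) ∧ (Set.range s.1 ∪ F)ᶜ.Infinite := by
  classical
  obtain ⟨N, hN⟩ := hF.bddAbove
  let s : ℕ → ℕ := fun n => if n ∈ A then n else 2 * (n + N + 1)
  have hs : ∀ n, (n ∈ A ∧ s n = n ∧ n ≤ N) ∨ (n ∉ A ∧ s n = 2 * (n + N + 1)) := fun n => by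
    by_cases hn : n ∈ A
    · exact .inl ⟨hn, if_pos hn, hN (hAF hn)⟩
    · exact .inr ⟨hn, if_neg hn⟩
  refine ⟨⟨s, fun m n h => ?_⟩, fun a ha => if_pos ha, fun n hn hnF => ?_, ?_⟩
  · rcases hs m with ⟨-, hm, hmN⟩ | ⟨-, hm⟩ <;> rcases hs n with ⟨-, hn, hnN⟩ | ⟨-, hn⟩ <;> omega
  · have : s n ≤ N := hN hnF
    rcases hs n with ⟨hA, -⟩ | ⟨-, hsn⟩
    exacts [hn hA, by omega]
  · -- the odd numbers beyond `N` are missed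
    refine Set.infinite_of_injective_forall_mem (f := fun m => 2 * (m + N + 1) + 1)
      (fun m n h => by simp only at h; omega) fun m hm => ?_
    rcases hm with ⟨n, hn⟩ | hmF
    · rcases hs n with ⟨-, hsn, hnN⟩ | ⟨-, hsn⟩ <;> simp only at hn <;> omega
    · have := hN hmF
      omega

lemma exists_fix_fix_mul_mul_eq {A B : Set ℕ} (hA : A.Finite) (hB : B.Finite) (w : Mi)
    (hw : ∀ a ∈ A, w.1 a = a) :
    ∃ s t : Mi, (∀ a ∈ A, s.1 a = a) ∧ (∀ b ∈ B, t.1 b = b) ∧ t * (w * s) = s := by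
  classical
  set F := A ∪ B ∪ w.1 ⁻¹' B
  have hF : F.Finite := (hA.union hB).union (hB.preimage w.2.injOn)
  obtain ⟨s, hsA, hsF, hs⟩ :=
    exists_fix_avoid (A := A) hF (Set.subset_union_left.trans Set.subset_union_left)
  have hfix : ∀ n, s.1 n ∈ B ∨ w.1 (s.1 n) ∈ B → w.1 (s.1 n) = s.1 n := fun n hn => by
    by_cases hnA : n ∈ A
    · rw [hsA n hnA, hw n hnA]
    · exact (hsF n hnA (by simp only [F, Set.mem_union, Set.mem_preimage]; tauto)).elim
  let g := B.piecewise id (s.1 ∘ Function.invFun (w * s).1)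
  have hg_B : ∀ b ∈ B, g b = b := fun b hb => B.piecewise_eq_of_mem _ _ hb
  have hg_ws : ∀ n, g (w.1 (s.1 n)) = s.1 n := fun n => by
    by_cases hn : w.1 (s.1 n) ∈ B
    · rw [hg_B _ hn, hfix n (.inr hn)]
    · exact (B.piecewise_eq_of_notMem _ _ hn).trans
        (congrArg s.1 (Function.leftInverse_invFun (w * s).2 n))
  -- `g` is injective on its domain since `w`, corrected to the identity on `B`, undoes it
  have hg : (Set.range (w * s).1 ∪ B).InjOn g := by
    refine Set.LeftInvOn.injOn (f₁' := B.piecewise id w.1) fun m hm => ?_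
    rcases hm with ⟨n, rfl⟩ | hm
    · change B.piecewise id w.1 (g (w.1 (s.1 n))) = w.1 (s.1 n)
      rw [hg_ws]
      by_cases hn : s.1 n ∈ B
      · rw [B.piecewise_eq_of_mem _ _ hn, id, hfix n (.inl hn)]
      · exact B.piecewise_eq_of_notMem _ _ hn
    · rw [hg_B m hm, B.piecewise_eq_of_mem _ _ hm, id]
  have hgD : (g '' (Set.range (w * s).1 ∪ B))ᶜ.Infinite := by
    refine hs.mono (Set.compl_subset_compl.2 ?_)
    rintro _ ⟨m, ⟨n, rfl⟩ | hm, rfl⟩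
    · exact .inl ⟨n, (hg_ws n).symm⟩
    · exact .inr (.inl (.inr (by rwa [hg_B m hm])))
  obtain ⟨t, ht⟩ := exists_eqOn_of_injOn hg hgD
  refine ⟨s, t, hsA, fun b hb => (ht (.inr hb)).trans (hg_B b hb),
    Subtype.ext (funext fun n => (ht (.inl ⟨n, rfl⟩)).trans (hg_ws n))⟩

end Mi

theorem Pi.mulSingle_mul_mulSingle_comp {ι κ M : Type*} [DecidableEq ι] [DecidableEq κ] [Monoid M]
    (φ : ι → κ) (i : ι) {w s t : M} (h : t * (w * s) = s) :
    Pi.mulSingle i w * (Pi.mulSingle (φ i) s ∘ φ) =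
      Function.update (Pi.mulSingle (φ i) t ∘ φ) i 1 * (Pi.mulSingle (φ i) (w * s) ∘ φ) := by
  funext j
  by_cases hj : j = i
  · subst hj
    simp
  · by_cases hφ : φ j = φ i <;> simp [hj, hφ, h]

namespace EMSSet

variable (E : EMSSet) {o : SimplexCategoryᵒᵖ}

def stabilizer (y : E.X.obj o) : Submonoid (Fin (o.unop.len + 1) → Mi) where
  carrier := {u | E.act o u y = y}
  one_mem' := E.act_one o y
  mul_mem' {u v} hu hv := (E.act_mul o u v y).trans (by rw [hv, hu])

variable {E}

lemma kSuppOn_iff {k : Fin (o.unop.len + 1)} {A : Set ℕ} {y : E.X.obj o} :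
    E.KSuppOn k A y ↔ ∀ w : Mi, (∀ a ∈ A, w.1 a = a) → Pi.mulSingle k w ∈ E.stabilizer y := by
  simp only [funext (Pi.mulSingle_apply k _)]
  rfl

lemma KSuppOn.mono {k : Fin (o.unop.len + 1)} {A B : Set ℕ} {y : E.X.obj o}
    (hy : E.KSuppOn k A y) (hAB : A ⊆ B) : E.KSuppOn k B y :=
  fun w hw => hy w fun a ha => hw a (hAB ha)

lemma SuppOn.act_eq_self {A : Set ℕ} {y : E.X.obj o} (hy : E.SuppOn A y)
    {u : Fin (o.unop.len + 1) → Mi} (hu : ∀ i, ∀ a ∈ A, (u i).1 a = a) : E.act o u y = y :=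
  Submonoid.pi_mem_of_mulSingle_mem (H := E.stabilizer y) u
    fun i => kSuppOn_iff.1 (hy i) _ (hu i)

lemma Tame.exists_suppOn (hE : E.Tame) (y : E.X.obj o) : ∃ B : Set ℕ, B.Finite ∧ E.SuppOn B y := by
  choose B hB hyB using hE o y
  exact ⟨⋃ k, B k, Set.finite_iUnion hB, fun k => (hyB k).mono (Set.subset_iUnion B k)⟩

lemma SuppOn.act_eq_act {A : Set ℕ} (hA : A.Finite) {y : E.X.obj o} (hy : E.SuppOn A y)
    {u v : Fin (o.unop.len + 1) → Mi} (huv : ∀ i, ∀ a ∈ A, (u i).1 a = (v i).1 a) :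
    E.act o u y = E.act o v y := by
  choose p q hpq hq using fun i => Mi.exists_mul_eq_one_and_fix hA (u i)
  have hpq : p * q = 1 := funext hpq
  have hp : ∀ w : Fin (o.unop.len + 1) → Mi, (∀ i, ∀ a ∈ A, (q i * w i).1 a = a) →
      E.act o w y = E.act o p y := fun w hw =>
    calc E.act o w y = E.act o (p * (q * w)) y := by rw [← mul_assoc, hpq, one_mul]
      _ = E.act o p y := (E.act_mul o p (q * w) y).trans (by rw [hy.act_eq_self (u := q * w) hw])
  refine (hp u hq).trans (hp v fun i a ha => ?_).symm
  exact (congrArg (q i).1 (huv i a ha)).symm.trans (hq i a ha)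

variable {o' : SimplexCategoryᵒᵖ}

lemma SuppOn.act_mulSingle_comp_map {A : Set ℕ} {x : E.X.obj o} (hx : E.SuppOn A x)
    (f : o ⟶ o') (k : Fin (o.unop.len + 1)) {r : Mi} (hr : ∀ a ∈ A, r.1 a = a) :
    E.act o' (Pi.mulSingle k r ∘ f.unop.toOrderHom) (E.X.map f x) = E.X.map f x := by
  have hrx : E.act o (Pi.mulSingle k r) x = x := kSuppOn_iff.1 (hx k) r hr
  exact (E.act_map f _ x).symm.trans (by rw [hrx])

lemma SuppOn.map (hE : E.Tame) {A : Set ℕ} (hA : A.Finite) {x : E.X.obj o} (hx : E.SuppOn A x)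
    (f : o ⟶ o') : E.SuppOn A (E.X.map f x) := by
  set φ := f.unop.toOrderHom
  set y := E.X.map f x
  obtain ⟨B, hB, hyB⟩ := hE.exists_suppOn y
  refine fun i => kSuppOn_iff.2 fun w hw => ?_
  obtain ⟨s, t, hs, ht, hts⟩ := Mi.exists_fix_fix_mul_mul_eq hA hB w hw
  have hws : ∀ a ∈ A, (w * s).1 a = a := fun a ha => (congrArg w.1 (hs a ha)).trans (hw a ha)
  have htB : ∀ j, ∀ b ∈ B, (Function.update (Pi.mulSingle (φ i) t ∘ φ) i 1 j).1 b = b := by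
    intro j b hb
    rcases eq_or_ne j i with rfl | hj
    · simp
    · by_cases hφ : φ j = φ i <;> simp [Function.update_of_ne hj, hφ, ht b hb]
  have hblock : ∀ r : Mi, (∀ a ∈ A, r.1 a = a) → E.act o' (Pi.mulSingle (φ i) r ∘ φ) y = y :=
    fun r hr => hx.act_mulSingle_comp_map f (φ i) hr
  calc E.act o' (Pi.mulSingle i w) y
      = E.act o' (Pi.mulSingle i w) (E.act o' (Pi.mulSingle (φ i) s ∘ φ) y) := by
        rw [hblock s hs]
    _ = E.act o' (Pi.mulSingle i w * (Pi.mulSingle (φ i) s ∘ φ)) y := (E.act_mul o' _ _ y).symm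
    _ = E.act o' (Function.update (Pi.mulSingle (φ i) t ∘ φ) i 1 *
          (Pi.mulSingle (φ i) (w * s) ∘ φ)) y := by
        rw [Pi.mulSingle_mul_mulSingle_comp φ i hts]
    _ = E.act o' (Function.update (Pi.mulSingle (φ i) t ∘ φ) i 1)
          (E.act o' (Pi.mulSingle (φ i) (w * s) ∘ φ) y) := E.act_mul o' _ _ y
    _ = y := by rw [hblock _ hws, hyB.act_eq_self htB]

end EMSSet

theorem act_eq_of_agree_on_support (E : EMSSet) (hE : E.Tame)
    {o o' : SimplexCategoryᵒᵖ} (f : o ⟶ o') (x : E.X.obj o)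
    (A : Set ℕ) (hA : A.Finite) (hx : E.SuppOn A x)
    (u v : Fin (o'.unop.len + 1) → Mi)
    (huv : ∀ (i : Fin (o'.unop.len + 1)), ∀ a ∈ A, (u i).1 a = (v i).1 a) :
    E.act o' u (E.X.map f x) = E.act o' v (E.X.map f x) :=
  (hx.map hE hA f).act_eq_act hA huv
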